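/- (Error difference inequality, last neighborhood.) Let f* satisfy the LPA stationarity condition. Then C_in(l)·(E_in(l) − E_out(l−1)) + μ Σ_{i∈N_l} |f*_i − y_i| ≤ s_l + μ|N_l|·α_l, where E_in, E_out are evaluated at f = f*. -/

import Mathlib

open Finset

/-- The graph on the data points: an edge between distinct `i, j` iff the weight is positive. -/
def graphOf {N : ℕ} (w : Fin N → Fin N → ℝ) : SimpleGraph (Fin N) where
  Adj i j := i ≠ j ∧ 0 < w i j ∧ 0 < w j i
  symm := ⟨fun _ _ h => ⟨h.1.symm, h.2.2, h.2.1⟩⟩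
  loopless := ⟨fun _ h => h.1 rfl⟩

/-- Hop distance from `i` to the set `L = {0, …, n−1}` of labeled points
(`⊤` if `i` is not reachable from any labeled point). -/
noncomputable def hopDist {N : ℕ} (w : Fin N → Fin N → ℝ) (n : ℕ) (i : Fin N) : ℕ∞ :=
  ⨅ v ∈ {v : Fin N | (v : ℕ) < n}, (graphOf w).edist i v

open scoped Classical in
/-- `N_k`: the set of points at hop distance exactly `k` from the labeled set. -/
noncomputable def Nbhd {N : ℕ} (w : Fin N → Fin N → ℝ) (n k : ℕ) : Finset (Fin N) :=
  Finset.univ.filter fun i => hopDist w n i = (k : ℕ∞)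

/-- In-flow `C_in(k) = ∑_{i∈N_k, j∈N_{k−1}} wᵢⱼ`. -/
noncomputable def Cin {N : ℕ} (w : Fin N → Fin N → ℝ) (n k : ℕ) : ℝ :=
  ∑ i ∈ Nbhd w n k, ∑ j ∈ Nbhd w n (k - 1), w i j

/-- Out-flow `C_out(k) = ∑_{i∈N_k, j∈N_{k+1}} wᵢⱼ`. -/
noncomputable def Cout {N : ℕ} (w : Fin N → Fin N → ℝ) (n k : ℕ) : ℝ :=
  ∑ i ∈ Nbhd w n k, ∑ j ∈ Nbhd w n (k + 1), w i j

/-- In-error `E_in(k) = (∑_{i∈N_k, j∈N_{k−1}} wᵢⱼ|fᵢ − yᵢ|) / C_in(k)`. -/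
noncomputable def Ein {N : ℕ} (w : Fin N → Fin N → ℝ) (n : ℕ) (y f : Fin N → ℝ) (k : ℕ) : ℝ :=
  (∑ i ∈ Nbhd w n k, ∑ j ∈ Nbhd w n (k - 1), w i j * |f i - y i|) / Cin w n k

/-- Out-error `E_out(k) = (∑_{i∈N_k, j∈N_{k+1}} wᵢⱼ|fᵢ − yᵢ|) / C_out(k)`. -/
noncomputable def Eout {N : ℕ} (w : Fin N → Fin N → ℝ) (n : ℕ) (y f : Fin N → ℝ) (k : ℕ) : ℝ :=
  (∑ i ∈ Nbhd w n k, ∑ j ∈ Nbhd w n (k + 1), w i j * |f i - y i|) / Cout w n k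

/-- Smoothness `s_k = ∑_{i∈N_k} ∑_j wᵢⱼ|yⱼ − yᵢ|`. -/
noncomputable def smoothnessOf {N : ℕ} (w : Fin N → Fin N → ℝ) (n : ℕ) (y : Fin N → ℝ)
    (k : ℕ) : ℝ :=
  ∑ i ∈ Nbhd w n k, ∑ j : Fin N, w i j * |y j - y i|

/-- Prior information error `α_k = (∑_{i∈N_k} |hᵢ − yᵢ|) / |N_k|`. -/
noncomputable def priorErr {N : ℕ} (w : Fin N → Fin N → ℝ) (n : ℕ) (y h : Fin N → ℝ)
    (k : ℕ) : ℝ :=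
  (∑ i ∈ Nbhd w n k, |h i - y i|) / (Nbhd w n k).card

/-- Average error `E_k = (∑_{i∈N_k} |fᵢ − yᵢ|) / |N_k|`. -/
noncomputable def avgErr {N : ℕ} (w : Fin N → Fin N → ℝ) (n : ℕ) (y f : Fin N → ℝ)
    (k : ℕ) : ℝ :=
  (∑ i ∈ Nbhd w n k, |f i - y i|) / (Nbhd w n k).card

/-!
Write `e = f* − y`. Every vertex of the last layer `N_l` is unlabeled, so stationarity expresses
`eᵢ` through the `f*ⱼ − yᵢ` and `hᵢ − yᵢ`, and the triangle inequality bounds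
`∑ⱼ wᵢⱼ (|eᵢ| − |eⱼ|) + μ|eᵢ|` by the local smoothness plus `μ|hᵢ − yᵢ|`. Summing over `N_l`,
the terms of edges inside `N_l` cancel by symmetry of `w`; as `N_l` has no neighbours outside
`N_{l−1} ∪ N_l`, what is left on the left is exactly `C_in(l) (E_in(l) − E_out(l−1))`.
-/

section Layers

variable {N n : ℕ} {w : Fin N → Fin N → ℝ}

lemma hopDist_eq_zero_of_lt (w : Fin N → Fin N → ℝ) {i : Fin N} (hi : (i : ℕ) < n) :
    hopDist w n i = 0 :=
  nonpos_iff_eq_zero.mp ((iInf₂_le i hi).trans_eq (graphOf w).edist_self)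

lemma hopDist_le_hopDist_add_one {i j : Fin N} (hij : (graphOf w).Adj i j) :
    hopDist w n j ≤ hopDist w n i + 1 := by
  rw [hopDist, hopDist, ENat.iInf₂_add]
  refine le_iInf₂ fun v hv => (iInf₂_le v hv).trans ?_
  calc (graphOf w).edist j v ≤ (graphOf w).edist j i + (graphOf w).edist i v :=
        SimpleGraph.edist_triangle
    _ = (graphOf w).edist i v + 1 := by
        rw [SimpleGraph.edist_eq_one_iff_adj.mpr hij.symm, add_comm]

lemma mem_Nbhd {k : ℕ} {i : Fin N} : i ∈ Nbhd w n k ↔ hopDist w n i = k := by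
  simp [Nbhd]

lemma le_of_mem_Nbhd {k : ℕ} (hk : 1 ≤ k) {i : Fin N} (hi : i ∈ Nbhd w n k) : n ≤ (i : ℕ) := by
  by_contra! hlt
  rw [mem_Nbhd, hopDist_eq_zero_of_lt w hlt] at hi
  norm_cast at hi
  omega

lemma disjoint_Nbhd {k k' : ℕ} (hkk' : k ≠ k') : Disjoint (Nbhd w n k) (Nbhd w n k') :=
  disjoint_left.mpr fun _ hi hi' => hkk' <| by
    rw [mem_Nbhd] at hi hi'
    exact_mod_cast hi.symm.trans hi'

lemma mem_Nbhd_of_adj {k : ℕ} {i j : Fin N} (hij : (graphOf w).Adj i j) (hi : i ∈ Nbhd w n k) :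
    j ∈ Nbhd w n (k - 1) ∨ j ∈ Nbhd w n k ∨ j ∈ Nbhd w n (k + 1) := by
  simp only [mem_Nbhd] at hi ⊢
  have hup := hopDist_le_hopDist_add_one (n := n) hij
  have hdown := hopDist_le_hopDist_add_one (n := n) hij.symm
  rw [hi] at hup hdown
  lift hopDist w n j to ℕ using ne_top_of_le_ne_top (by simp) hup with m
  norm_cast at hup hdown ⊢
  omega

lemma weight_eq_zero_of_mem_Nbhd_last (hw_symm : ∀ i j, w i j = w j i)
    (hw_nonneg : ∀ i j, 0 ≤ w i j) {l : ℕ} (hlast : Nbhd w n (l + 1) = ∅) {i j : Fin N}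
    (hi : i ∈ Nbhd w n l) (hj : j ∉ Nbhd w n (l - 1) ∪ Nbhd w n l) : w i j = 0 := by
  by_contra hwij
  have hpos : 0 < w i j := (hw_nonneg i j).lt_of_ne' hwij
  have hne : i ≠ j := by rintro rfl; exact hj (mem_union_right _ hi)
  have hadj : (graphOf w).Adj i j := ⟨hne, hpos, hw_symm i j ▸ hpos⟩
  rcases mem_Nbhd_of_adj hadj hi with h | h | h
  · exact hj (mem_union_left _ h)
  · exact hj (mem_union_right _ h)
  · simp [hlast] at h

end Layers

lemma abs_sub_mul_le_of_eq_weighted_mean {ι : Type*} [Fintype ι] {a f y : ι → ℝ}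
    (ha : ∀ j, 0 ≤ a j) {μ : ℝ} (hμ : 0 ≤ μ) {x x₀ h : ℝ}
    (hx : x = (∑ j, a j * f j + μ * h) / (∑ j, a j + μ)) :
    |x - x₀| * (∑ j, a j + μ) ≤
      ∑ j, a j * |f j - y j| + ∑ j, a j * |y j - x₀| + μ * |h - x₀| := by
  have hS : 0 ≤ ∑ j, a j + μ := add_nonneg (sum_nonneg fun j _ => ha j) hμ
  rcases hS.eq_or_lt with hS0 | hSpos
  · rw [← hS0, mul_zero]
    have := sum_nonneg fun j (_ : j ∈ univ) => mul_nonneg (ha j) (abs_nonneg (f j - y j))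
    have := sum_nonneg fun j (_ : j ∈ univ) => mul_nonneg (ha j) (abs_nonneg (y j - x₀))
    have := mul_nonneg hμ (abs_nonneg (h - x₀))
    linarith
  have hdev : (x - x₀) * (∑ j, a j + μ) = ∑ j, a j * (f j - x₀) + μ * (h - x₀) := by
    rw [hx, sub_mul, div_mul_cancel₀ _ hSpos.ne']
    simp only [mul_sub, sum_sub_distrib, ← sum_mul]
    ring
  calc |x - x₀| * (∑ j, a j + μ) = |∑ j, a j * (f j - x₀) + μ * (h - x₀)| := by
        rw [← hdev, abs_mul, abs_of_pos hSpos]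
    _ ≤ ∑ j, a j * |f j - x₀| + μ * |h - x₀| := by
        refine (abs_add_le _ _).trans (add_le_add ((abs_sum_le_sum_abs _ _).trans_eq ?_) ?_)
        · simp only [abs_mul, abs_of_nonneg (ha _)]
        · rw [abs_mul, abs_of_nonneg hμ]
    _ ≤ ∑ j, a j * (|f j - y j| + |y j - x₀|) + μ * |h - x₀| := by
        gcongr with j
        · exact ha j
        · exact abs_sub_le _ _ _
    _ = _ := by simp only [mul_add, sum_add_distrib]

lemma sum_sum_mul_sub_eq_of_support {ι : Type*} [Fintype ι] [DecidableEq ι] {w : ι → ι → ℝ}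
    (hw_symm : ∀ i j, w i j = w j i) {A B : Finset ι} (hBA : Disjoint B A)
    (hsupp : ∀ i ∈ A, ∀ j ∉ B ∪ A, w i j = 0) (e : ι → ℝ) :
    ∑ i ∈ A, ∑ j, w i j * (e i - e j) = ∑ i ∈ A, ∑ j ∈ B, w i j * (e i - e j) := by
  have hinner : ∑ i ∈ A, ∑ j ∈ A, w i j * (e i - e j) = 0 := by
    have hanti : ∑ i ∈ A, ∑ j ∈ A, w i j * (e i - e j) =
        -∑ i ∈ A, ∑ j ∈ A, w i j * (e i - e j) := by
      nth_rewrite 1 [sum_comm]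
      simp only [← sum_neg_distrib]
      exact sum_congr rfl fun i _ => sum_congr rfl fun j _ => by rw [hw_symm]; ring
    linarith
  calc ∑ i ∈ A, ∑ j, w i j * (e i - e j) = ∑ i ∈ A, ∑ j ∈ B ∪ A, w i j * (e i - e j) :=
        sum_congr rfl fun i hi =>
          (sum_subset (subset_univ _) fun j _ hj => by rw [hsupp i hi j hj, zero_mul]).symm
    _ = ∑ i ∈ A, ∑ j ∈ B, w i j * (e i - e j) := by
        simp only [sum_union hBA, sum_add_distrib, hinner, add_zero]

lemma sum_sum_mul_div_cancel {α β : Type*} {s : Finset α} {t : Finset β} {c : α → β → ℝ}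
    (hc : ∀ i ∈ s, ∀ j ∈ t, 0 ≤ c i j) (g : α → β → ℝ) :
    (∑ i ∈ s, ∑ j ∈ t, c i j) * ((∑ i ∈ s, ∑ j ∈ t, c i j * g i j) / ∑ i ∈ s, ∑ j ∈ t, c i j) =
      ∑ i ∈ s, ∑ j ∈ t, c i j * g i j := by
  refine mul_div_cancel_of_imp' fun h0 => sum_eq_zero fun i hi => sum_eq_zero fun j hj => ?_
  rw [sum_eq_zero_iff_of_nonneg fun i hi => sum_nonneg (hc i hi)] at h0
  rw [(sum_eq_zero_iff_of_nonneg (hc i hi)).mp (h0 i hi) j hj, zero_mul]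

section Flows

variable {N n : ℕ} {w : Fin N → Fin N → ℝ}

lemma Cin_mul_Ein (hw_nonneg : ∀ i j, 0 ≤ w i j) (y f : Fin N → ℝ) (k : ℕ) :
    Cin w n k * Ein w n y f k =
      ∑ i ∈ Nbhd w n k, ∑ j ∈ Nbhd w n (k - 1), w i j * |f i - y i| :=
  sum_sum_mul_div_cancel (fun i _ j _ => hw_nonneg i j) _

lemma Cout_mul_Eout (hw_nonneg : ∀ i j, 0 ≤ w i j) (y f : Fin N → ℝ) (k : ℕ) :
    Cout w n k * Eout w n y f k =
      ∑ i ∈ Nbhd w n k, ∑ j ∈ Nbhd w n (k + 1), w i j * |f i - y i| :=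
  sum_sum_mul_div_cancel (fun i _ j _ => hw_nonneg i j) _

lemma Cout_sub_one (hw_symm : ∀ i j, w i j = w j i) {k : ℕ} (hk : 1 ≤ k) :
    Cout w n (k - 1) = Cin w n k := by
  rw [Cout, Cin, Nat.sub_add_cancel hk, sum_comm]
  exact sum_congr rfl fun _ _ => sum_congr rfl fun _ _ => hw_symm _ _

lemma Cin_mul_sub_Eout_sub_one (hw_symm : ∀ i j, w i j = w j i)
    (hw_nonneg : ∀ i j, 0 ≤ w i j) {k : ℕ} (hk : 1 ≤ k) (y f : Fin N → ℝ) :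
    Cin w n k * (Ein w n y f k - Eout w n y f (k - 1)) =
      ∑ i ∈ Nbhd w n k, ∑ j ∈ Nbhd w n (k - 1), w i j * (|f i - y i| - |f j - y j|) := by
  rw [mul_sub, Cin_mul_Ein hw_nonneg, ← Cout_sub_one hw_symm hk, Cout_mul_Eout hw_nonneg,
    Nat.sub_add_cancel hk, sum_comm (s := Nbhd w n (k - 1))]
  simp only [mul_sub, sum_sub_distrib]
  congr 1
  exact sum_congr rfl fun _ _ => sum_congr rfl fun _ _ => by rw [hw_symm]

lemma card_mul_priorErr (y h : Fin N → ℝ) (k : ℕ) :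
    ((Nbhd w n k).card : ℝ) * priorErr w n y h k = ∑ i ∈ Nbhd w n k, |h i - y i| :=
  mul_div_cancel_of_imp' fun h0 => by
    rw [(card_eq_zero (s := Nbhd w n k)).mp (by exact_mod_cast h0), sum_empty]

end Flows

theorem error_difference_inequality_last_general
    {N n : ℕ}
    (w : Fin N → Fin N → ℝ)
    (hw_symm : ∀ i j, w i j = w j i)
    (hw_nonneg : ∀ i j, 0 ≤ w i j)
    (y h : Fin N → ℝ)
    (μ : ℝ) (hμ : 0 ≤ μ)
    (fstar : Fin N → ℝ)
    (hstat : ∀ i : Fin N, n ≤ (i : ℕ) →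
      fstar i = ((∑ j, w i j * fstar j) + μ * h i) / ((∑ j, w i j) + μ))
    (l : ℕ) (hl : 1 ≤ l)
    (hmax : ∀ k, l < k → Nbhd w n k = ∅) :
    Cin w n l * (Ein w n y fstar l - Eout w n y fstar (l - 1))
        + μ * ∑ i ∈ Nbhd w n l, |fstar i - y i|
      ≤ smoothnessOf w n y l + μ * (Nbhd w n l).card * priorErr w n y h l := by
  have hlocal : ∀ i ∈ Nbhd w n l,
      ∑ j, w i j * (|fstar i - y i| - |fstar j - y j|) + μ * |fstar i - y i| ≤
        ∑ j, w i j * |y j - y i| + μ * |h i - y i| := fun i hi => by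
    have hbound := abs_sub_mul_le_of_eq_weighted_mean (hw_nonneg i) hμ (x₀ := y i) (y := y)
      (hstat i (le_of_mem_Nbhd hl hi))
    simp only [mul_sub, sum_sub_distrib, ← sum_mul]
    linarith
  have hflux := sum_sum_mul_sub_eq_of_support hw_symm
    (disjoint_Nbhd (k := l - 1) (k' := l) (by omega))
    (fun i hi j hj => weight_eq_zero_of_mem_Nbhd_last hw_symm hw_nonneg (hmax _ (by omega)) hi hj)
    (fun i => |fstar i - y i|)
  calc _ = ∑ i ∈ Nbhd w n l,
        (∑ j, w i j * (|fstar i - y i| - |fstar j - y j|) + μ * |fstar i - y i|) := by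
        rw [Cin_mul_sub_Eout_sub_one hw_symm hw_nonneg hl, ← hflux, sum_add_distrib, mul_sum]
    _ ≤ ∑ i ∈ Nbhd w n l, (∑ j, w i j * |y j - y i| + μ * |h i - y i|) := sum_le_sum hlocal
    _ = _ := by rw [sum_add_distrib, ← mul_sum, mul_assoc, card_mul_priorErr]; rfl

/-- (Error difference inequality, last neighborhood.) If `f*` satisfies the
LPA stationarity condition, then
`C_in(l)(E_in(l) − E_out(l−1)) + μ ∑_{i∈N_l}|f*ᵢ − yᵢ| ≤ s_l + μ|N_l|α_l`. -/
theorem error_difference_inequality_last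
    {N n : ℕ} (hn : 0 < n) (hnN : n ≤ N)
    (w : Fin N → Fin N → ℝ)
    (hw_symm : ∀ i j, w i j = w j i)
    (hw_nonneg : ∀ i j, 0 ≤ w i j)
    (y h : Fin N → ℝ)
    (hy : ∀ i, y i ∈ Set.Icc (0 : ℝ) 1)
    (hh : ∀ i, h i ∈ Set.Icc (0 : ℝ) 1)
    (μ : ℝ) (hμ : 0 ≤ μ)
    (fstar : Fin N → ℝ)
    (hconstr : ∀ i : Fin N, (i : ℕ) < n → fstar i = y i)
    (hstat : ∀ i : Fin N, n ≤ (i : ℕ) →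
      fstar i = ((∑ j, w i j * fstar j) + μ * h i) / ((∑ j, w i j) + μ))
    (l : ℕ) (hl : 1 ≤ l)
    (hne : ∀ k, k ≤ l → (Nbhd w n k).Nonempty)
    (hmax : ∀ k, l < k → Nbhd w n k = ∅) :
    Cin w n l * (Ein w n y fstar l - Eout w n y fstar (l - 1))
        + μ * ∑ i ∈ Nbhd w n l, |fstar i - y i|
      ≤ smoothnessOf w n y l + μ * (Nbhd w n l).card * priorErr w n y h l :=
  error_difference_inequality_last_general w hw_symm hw_nonneg y h μ hμ fstar hstat l hl hmax
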